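/- Arcsine lower bound for the phase integral: let 0 < k₀ ≤ k₁ < k₂ ≤ 1 and let η ≥ V(k₁). Set H = V(k₁) − (1 + 1/k₀)·(1 − k₁)² and ρ = √((η − H)/(1 + 1/k₀)) (so ρ ≥ 1 − k₁). Then ∫_{k₁}^{k₂} (η − V(k))^{−1/2} dk > (1 + 1/k₀)^{−1/2}·( arcsin((1 − k₁)/ρ) − arcsin((1 − k₂)/ρ) ). In the special case η = V(k₁) one has ρ = 1 − k₁. -/

import Mathlib

/-!
On `(k₁, k₂]` we have `0 < η - V k < (1 + 1/k₀) (ρ² - (1 - k)²)`: the left inequality because `V`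
decreases on `(0, 1]`, the right one because `V k - (1 + 1/k₀) (k - 1)²` increases on `[k₀, 1]`
and both sides agree at `k₁`. So the integrand strictly dominates
`(1 + 1/k₀)^(-1/2) (ρ² - (1 - k)²)^(-1/2)`, whose integral is the arcsine difference. The integrand
may blow up at `k₁`; it stays integrable because convexity puts `V` below its chord on `[k₁, k₂]`,
so `η - V k` grows at least linearly in `k - k₁`.
-/

open Real

noncomputable def V (k : ℝ) : ℝ := k ^ 2 - 2 * Real.log k

open Set MeasureTheory intervalIntegral

lemma hasDerivAt_V {k : ℝ} (hk : k ≠ 0) : HasDerivAt V (2 * k - 2 / k) k := by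
  refine ((hasDerivAt_pow 2 k).fun_sub ((hasDerivAt_log hk).const_mul 2)).congr_deriv ?_
  push_cast
  ring

lemma continuousOn_V : ContinuousOn V (Ioi 0) :=
  fun _ hk => (hasDerivAt_V (ne_of_gt hk)).continuousAt.continuousWithinAt

lemma measurable_V : Measurable V := by
  unfold V; fun_prop

lemma convexOn_V : ConvexOn ℝ (Ioi 0) V := by
  have hlog : ConcaveOn ℝ (Ioi 0) fun k : ℝ => 2 * log k := by
    simpa only [smul_eq_mul] using strictConcaveOn_log_Ioi.concaveOn.smul zero_le_two
  exact ((convexOn_pow 2).subset Ioi_subset_Ici_self (convex_Ioi 0)).sub hlog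

lemma strictAntiOn_V : StrictAntiOn V (Ioc 0 1) := by
  refine strictAntiOn_of_hasDerivWithinAt_neg (convex_Ioc 0 1)
    (continuousOn_V.mono Ioc_subset_Ioi_self)
    (fun x hx => (hasDerivAt_V (interior_subset hx).1.ne').hasDerivWithinAt) fun x hx => ?_
  rw [interior_Ioc] at hx
  linarith [one_lt_one_div hx.1 hx.2, mul_one_div (2 : ℝ) x, hx.2]

lemma strictMonoOn_V_sub_mul_sq {k₀ : ℝ} (h₀ : 0 < k₀) :
    StrictMonoOn (fun k => V k - (1 + 1 / k₀) * (k - 1) ^ 2) (Icc k₀ 1) := by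
  have hderiv : ∀ x, 0 < x → HasDerivAt (fun k => V k - (1 + 1 / k₀) * (k - 1) ^ 2)
      (2 * (x - 1) * (1 / x - 1 / k₀)) x := by
    intro x hx
    refine ((hasDerivAt_V hx.ne').fun_sub
      ((((hasDerivAt_id x).sub_const 1).fun_pow 2).const_mul _)).congr_deriv ?_
    simp only [id, Nat.cast_ofNat]
    field_simp
    ring
  refine strictMonoOn_of_hasDerivWithinAt_pos (convex_Icc k₀ 1)
    (fun x hx => (hderiv x (h₀.trans_le hx.1)).continuousAt.continuousWithinAt)
    (fun x hx => (hderiv x (h₀.trans_le (interior_subset hx).1)).hasDerivWithinAt)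
    fun x hx => ?_
  rw [interior_Icc] at hx
  exact mul_pos_of_neg_of_neg (by linarith [hx.2]) (by
    linarith [one_div_lt_one_div_of_lt h₀ hx.1])

lemma intervalIntegrable_inv_sqrt_of_mul_sub_le {φ : ℝ → ℝ} {a b α : ℝ} (hab : a ≤ b)
    (hα : 0 < α) (hφ : Measurable φ) (hle : ∀ x ∈ Ioc a b, α * (x - a) ≤ φ x) :
    IntervalIntegrable (fun x => (√(φ x))⁻¹) volume a b := by
  have hdom : IntervalIntegrable (fun x => (√α)⁻¹ * (x - a) ^ (-(1 / 2) : ℝ)) volume a b := by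
    have := (intervalIntegrable_rpow' (a := 0) (b := b - a) (r := -(1 / 2)) (by norm_num))
    simpa using (this.comp_sub_right a).const_mul (√α)⁻¹
  refine hdom.mono_fun' (by fun_prop) ?_
  rw [uIoc_of_le hab, Filter.EventuallyLE, ae_restrict_iff' measurableSet_Ioc]
  refine ae_of_all _ fun x hx => ?_
  have hx₀ : 0 < x - a := sub_pos.2 hx.1
  rw [norm_inv, norm_of_nonneg (sqrt_nonneg _), rpow_neg hx₀.le, ← sqrt_eq_rpow, ← mul_inv,
    ← sqrt_mul hα.le]
  exact inv_anti₀ (sqrt_pos.2 (mul_pos hα hx₀)) (sqrt_le_sqrt (hle x hx))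

lemma hasDerivAt_neg_arcsin_sub_div {m ρ x : ℝ} (hρ : 0 < ρ) (hx : x ∈ Ioo (m - ρ) (m + ρ)) :
    HasDerivAt (fun y => -arcsin ((m - y) / ρ)) (√(ρ ^ 2 - (m - x) ^ 2))⁻¹ x := by
  have hlo' : -1 < (m - x) / ρ := by rw [lt_div_iff₀ hρ]; linarith [hx.2]
  have hhi' : (m - x) / ρ < 1 := by rw [div_lt_one hρ]; linarith [hx.1]
  refine ((hasDerivAt_arcsin hlo'.ne' hhi'.ne).comp x
    (((hasDerivAt_id x).const_sub m).div_const ρ)).neg.congr_deriv ?_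
  have hsq : ρ ^ 2 - (m - x) ^ 2 = ρ ^ 2 * (1 - ((m - x) / ρ) ^ 2) := by
    field_simp
  rw [hsq, sqrt_mul (sq_nonneg ρ), sqrt_sq hρ.le]
  field_simp

lemma intervalIntegrable_inv_sqrt_sq_sub_sq {m ρ a b : ℝ} (hρ : 0 < ρ)
    (ha : a ∈ Icc (m - ρ) (m + ρ)) (hb : b ∈ Icc (m - ρ) (m + ρ)) :
    IntervalIntegrable (fun x => (√(ρ ^ 2 - (m - x) ^ 2))⁻¹) volume a b := by
  refine intervalIntegrable_deriv_of_nonneg (g := fun y => -arcsin ((m - y) / ρ))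
    (by fun_prop) (fun x hx => hasDerivAt_neg_arcsin_sub_div hρ
      (Ioo_subset_Ioo (le_min ha.1 hb.1) (max_le ha.2 hb.2) hx)) fun _ _ => by positivity

theorem integral_inv_sqrt_sq_sub_sq {m ρ a b : ℝ} (hρ : 0 < ρ)
    (ha : a ∈ Icc (m - ρ) (m + ρ)) (hb : b ∈ Icc (m - ρ) (m + ρ)) :
    ∫ x in a..b, (√(ρ ^ 2 - (m - x) ^ 2))⁻¹ = arcsin ((m - a) / ρ) - arcsin ((m - b) / ρ) := by
  wlog hab : a ≤ b generalizing a b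
  · rw [integral_symm, this hb ha (le_of_not_ge hab)]
    ring
  rw [integral_eq_sub_of_hasDerivAt_of_le hab (by fun_prop)
    (fun x hx => hasDerivAt_neg_arcsin_sub_div hρ (Ioo_subset_Ioo ha.1 hb.2 hx))
    (intervalIntegrable_inv_sqrt_sq_sub_sq hρ ha hb)]
  ring

lemma intervalIntegrable_inv_sqrt_sub_V {k₁ k₂ η : ℝ} (hk₁ : 0 < k₁) (h₁₂ : k₁ < k₂)
    (h₂ : k₂ ≤ 1) (hη : V k₁ ≤ η) :
    IntervalIntegrable (fun k => (√(η - V k))⁻¹) volume k₁ k₂ := by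
  have hk₂ : 0 < k₂ := hk₁.trans h₁₂
  have hα : 0 < (V k₁ - V k₂) / (k₂ - k₁) := div_pos
    (sub_pos.2 (strictAntiOn_V ⟨hk₁, h₁₂.le.trans h₂⟩ ⟨hk₂, h₂⟩ h₁₂)) (sub_pos.2 h₁₂)
  refine intervalIntegrable_inv_sqrt_of_mul_sub_le h₁₂.le hα
    (measurable_const.sub measurable_V) fun x hx => ?_
  have hchord := convexOn_V.secant_mono (mem_Ioi.2 hk₁) (mem_Ioi.2 (hk₁.trans hx.1))
    (mem_Ioi.2 hk₂) hx.1.ne' h₁₂.ne' hx.2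
  rw [div_le_iff₀ (sub_pos.2 hx.1), ← neg_sub (V k₁) (V k₂), neg_div, neg_mul] at hchord
  linarith

theorem stmt_6 (k₀ k₁ k₂ η : ℝ) (h₀ : 0 < k₀) (h₀₁ : k₀ ≤ k₁) (h₁₂ : k₁ < k₂)
    (h₂ : k₂ ≤ 1) (hη : V k₁ ≤ η) :
    (∫ k in k₁..k₂, (Real.sqrt (η - V k))⁻¹) >
      (Real.sqrt (1 + 1 / k₀))⁻¹ *
        (Real.arcsin ((1 - k₁) /
            Real.sqrt ((η - (V k₁ - (1 + 1 / k₀) * (1 - k₁) ^ 2)) / (1 + 1 / k₀))) -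
         Real.arcsin ((1 - k₂) /
            Real.sqrt ((η - (V k₁ - (1 + 1 / k₀) * (1 - k₁) ^ 2)) / (1 + 1 / k₀)))) ∧
    (η = V k₁ →
      Real.sqrt ((η - (V k₁ - (1 + 1 / k₀) * (1 - k₁) ^ 2)) / (1 + 1 / k₀)) = 1 - k₁) := by
  set c := 1 + 1 / k₀
  set ρ := √((η - (V k₁ - c * (1 - k₁) ^ 2)) / c) with hρ_def
  have hc : 0 < c := by positivity
  have hk₁ : 0 < k₁ := h₀.trans_le h₀₁
  have hρ_sq : c * ρ ^ 2 = η - V k₁ + c * (1 - k₁) ^ 2 := by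
    rw [hρ_def, sq_sqrt (div_nonneg (by nlinarith) hc.le), mul_div_cancel₀ _ hc.ne']
    ring
  have hρ : 1 - k₁ ≤ ρ := (abs_le_of_sq_le_sq' (by nlinarith) (sqrt_nonneg _)).2
  refine ⟨?_, fun hη' => ?_⟩
  swap
  · rw [hρ_def, hη', show V k₁ - (V k₁ - c * (1 - k₁) ^ 2) = (1 - k₁) ^ 2 * c by ring,
      mul_div_cancel_right₀ _ hc.ne', sqrt_sq (by linarith)]
  have hk₁ρ : k₁ ∈ Icc (1 - ρ) (1 + ρ) := ⟨by linarith, by linarith⟩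
  have hk₂ρ : k₂ ∈ Icc (1 - ρ) (1 + ρ) := ⟨by linarith, by linarith⟩
  have hf := intervalIntegrable_inv_sqrt_sub_V hk₁ h₁₂ h₂ hη
  have hg := (intervalIntegrable_inv_sqrt_sq_sub_sq (by linarith) hk₁ρ hk₂ρ).const_mul (√c)⁻¹
  rw [gt_iff_lt, ← integral_inv_sqrt_sq_sub_sq (by linarith) hk₁ρ hk₂ρ,
    ← intervalIntegral.integral_const_mul, ← sub_pos, ← integral_sub hf hg]
  refine intervalIntegral_pos_of_pos_on (hf.sub hg) (fun k hk => ?_) h₁₂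
  have hpos : 0 < η - V k := by
    have := strictAntiOn_V ⟨hk₁, h₁₂.le.trans h₂⟩ ⟨hk₁.trans hk.1, hk.2.le.trans h₂⟩ hk.1
    linarith
  have hlt : η - V k < c * (ρ ^ 2 - (1 - k) ^ 2) := by
    have := strictMonoOn_V_sub_mul_sq h₀ ⟨h₀₁, h₁₂.le.trans h₂⟩
      ⟨h₀₁.trans hk.1.le, hk.2.le.trans h₂⟩ hk.1
    nlinarith
  rw [sub_pos, ← mul_inv, ← sqrt_mul hc.le]
  exact inv_strictAnti₀ (sqrt_pos.2 hpos) (sqrt_lt_sqrt hpos.le hlt)
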